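/- arXiv:1801.01875 — 6 statements merged into one kernel-verified Lean document; each statement's English description precedes it below -/
import Mathlib

section
/- Let K ≥ 2 and N ≥ 1 be integers, let S be a real number, and let j ∈ {1,…,K−1}. Let x_0, x_1, …, x_{K−1} be nonnegative real numbers satisfying ∑_{ℓ=0}^{K−1} x_ℓ = N and ∑_{ℓ=0}^{K−1} ℓ·x_ℓ ≤ K(S − N/K). Then ∑_{ℓ=0}^{K−1} x_ℓ/(ℓ+1) − N/K ≥ N(K−j)/(Kj) − K(S − jN/K)/(j(j+1)). -/
/-- The linear-programming core of the converse bound for data shuffling with `K` workers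
and `N` data points: `x ℓ` is the total normalized size of sub-batches stored in the excess
storage of exactly `ℓ` workers, `S` is the per-worker storage. -/
theorem dataShuffling_LP_lower_bound (K N : ℕ) (hK : 2 ≤ K) (hN : 1 ≤ N) (S : ℝ)
    (j : ℕ) (hj1 : 1 ≤ j) (hj2 : j ≤ K - 1) (x : ℕ → ℝ)
    (hx : ∀ ℓ ∈ Finset.range K, 0 ≤ x ℓ)
    (hsum : ∑ ℓ ∈ Finset.range K, x ℓ = (N : ℝ))
    (hstore : ∑ ℓ ∈ Finset.range K, (ℓ : ℝ) * x ℓ ≤ (K : ℝ) * (S - (N : ℝ) / K)) :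
    ∑ ℓ ∈ Finset.range K, x ℓ / ((ℓ : ℝ) + 1) - (N : ℝ) / K ≥
      (N : ℝ) * ((K : ℝ) - j) / (K * j) -
        (K : ℝ) * (S - (j : ℝ) * N / K) / ((j : ℝ) * (j + 1)) := by
  have hKpos : (0:ℝ) < K := by exact_mod_cast Nat.lt_of_lt_of_le (by norm_num) hK
  have hjpos : (0:ℝ) < j := by exact_mod_cast hj1
  have key : ∀ ℓ ∈ Finset.range K,
      (2/((j:ℝ)+1) - (ℓ:ℝ)/((j:ℝ)*((j:ℝ)+1))) * x ℓ ≤ x ℓ / ((ℓ:ℝ)+1) := by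
    intro ℓ hℓ
    have hx0 := hx ℓ hℓ
    have hfact : (0:ℝ) ≤ ((ℓ:ℝ) - j) * ((ℓ:ℝ) - j + 1) := by
      rcases le_or_gt j ℓ with h | h
      · have h' : (j:ℝ) ≤ ℓ := by exact_mod_cast h
        nlinarith
      · have h' : (ℓ:ℝ) + 1 ≤ j := by exact_mod_cast h
        nlinarith
    have hl1 : (0:ℝ) < (ℓ:ℝ) + 1 := by positivity
    have hcoef : 2/((j:ℝ)+1) - (ℓ:ℝ)/((j:ℝ)*((j:ℝ)+1)) ≤ 1/((ℓ:ℝ)+1) := by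
      rw [div_sub_div _ _ (by positivity) (by positivity),
        div_le_div_iff₀ (by positivity) hl1]
      nlinarith
    calc (2/((j:ℝ)+1) - (ℓ:ℝ)/((j:ℝ)*((j:ℝ)+1))) * x ℓ
        ≤ (1/((ℓ:ℝ)+1)) * x ℓ := mul_le_mul_of_nonneg_right hcoef hx0
      _ = x ℓ / ((ℓ:ℝ)+1) := by rw [one_div, inv_mul_eq_div]
  have hsum2 := Finset.sum_le_sum key
  have hexp : ∑ ℓ ∈ Finset.range K, (2/((j:ℝ)+1) - (ℓ:ℝ)/((j:ℝ)*((j:ℝ)+1))) * x ℓ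
      = 2/((j:ℝ)+1) * (∑ ℓ ∈ Finset.range K, x ℓ)
        - (1/((j:ℝ)*((j:ℝ)+1))) * ∑ ℓ ∈ Finset.range K, (ℓ:ℝ) * x ℓ := by
    rw [Finset.mul_sum, Finset.mul_sum, ← Finset.sum_sub_distrib]
    exact Finset.sum_congr rfl fun ℓ _ => by ring
  rw [hexp, hsum] at hsum2
  have hmono : (1/((j:ℝ)*((j:ℝ)+1))) * (∑ ℓ ∈ Finset.range K, (ℓ:ℝ) * x ℓ)
      ≤ (1/((j:ℝ)*((j:ℝ)+1))) * ((K:ℝ) * (S - (N:ℝ)/K)) :=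
    mul_le_mul_of_nonneg_left hstore (by positivity)
  have heq : (N : ℝ) * ((K : ℝ) - j) / (K * j)
        - (K : ℝ) * (S - (j : ℝ) * N / K) / ((j : ℝ) * (j + 1)) + (N:ℝ)/K
      = 2/((j:ℝ)+1) * (N:ℝ) - (1/((j:ℝ)*((j:ℝ)+1))) * ((K:ℝ) * (S - (N:ℝ)/K)) := by
    field_simp
    ring
  linarith
end

section
/- Let K ≥ 2 be an integer, let ℓ ∈ {0,…,K−1} and j ∈ {1,…,K−1}, and let f be any real-valued function on pairs (k, W) with k ∈ {1,…,K} and W ⊆ {1,…,K}\{k}, |W| = ℓ. Then ∑_{σ ∈ S_K} [ ∑_{W ⊆ {1,…,K}\{σ(j)}, |W| = ℓ} f(σ(j), W) − ∑_{W ⊆ {σ(1),…,σ(j−1)}, |W| = ℓ} f(σ(j), W) ] = (K−1)!·(1 − C(j−1, ℓ)/C(K−1, ℓ))·∑_{k=1}^{K} ∑_{W ⊆ {1,…,K}\{k}, |W| = ℓ} f(k, W), where S_K is the set of all permutations of {1,…,K} and C(n, r) denotes the binomial coefficient. -/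
/-!
For a point `p` and an `ℓ`-set `V ∌ p`, the orbit sum `∑_σ f(σ p, σ V)` does not depend on
`(p, V)`, since permutations act transitively on such pairs; call it `c`. Reindexing each inner sum
by `σ` turns the two terms on the left into `C(K-1, ℓ) c` and `C(j-1, ℓ) c`. Summing the orbit sums
over all `K C(K-1, ℓ)` pairs and swapping the order of summation gives `K C(K-1, ℓ) c = K! x_ℓ`,
which determines `c`.
-/

open Finset Nat

theorem Finset.sum_powersetCard_image_of_injective {α β M : Type*} [DecidableEq β]
    [AddCommMonoid M] {f : α → β} (hf : Function.Injective f) (S : Finset α) (ℓ : ℕ)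
    (g : Finset β → M) :
    ∑ W ∈ (S.image f).powersetCard ℓ, g W = ∑ V ∈ S.powersetCard ℓ, g (V.image f) := by
  have hmap (T : Finset α) : T.image f = T.map ⟨f, hf⟩ := (map_eq_image ⟨f, hf⟩ T).symm
  simp only [hmap, powersetCard_map, sum_map, RelEmbedding.coe_toEmbedding, mapEmbedding_apply]

section

variable {α : Type*} [DecidableEq α]

theorem Equiv.Perm.exists_apply_eq_and_image_eq {p p' : α} {V V' : Finset α} (hp : p ∉ V)
    (hp' : p' ∉ V') (h : #V = #V') : ∃ σ : Perm α, σ p = p' ∧ V.image σ = V' := by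
  let x := (Function.Embedding.subtype (· ∈ V)).optionElim p (by simpa using hp)
  let y := ((V.equivOfCardEq h).toEmbedding.trans (Function.Embedding.subtype (· ∈ V'))).optionElim
    p' (by rintro ⟨v, rfl⟩; exact hp' (V.equivOfCardEq h v).2)
  obtain ⟨σ, hσ⟩ := exists_smul_eq_embedding x y
  have hσx (o : Option V) : σ (x o) = y o := congr($hσ o)
  refine ⟨σ, hσx none, eq_of_subset_of_card_le (fun z hz => ?_) ?_⟩
  · obtain ⟨v, hv, rfl⟩ := mem_image.1 hz
    rw [show σ v = y (some ⟨v, hv⟩) from hσx (some ⟨v, hv⟩)]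
    exact (V.equivOfCardEq h ⟨v, hv⟩).2
  · rw [card_image_of_injective _ σ.injective, h]

variable [Fintype α] {M : Type*} [AddCommMonoid M]

/-- The paper's aggregate `x_ℓ`. -/
def pointedSubsetSum (ℓ : ℕ) (f : α → Finset α → M) : M :=
  ∑ k, ∑ W ∈ (univ \ {k}).powersetCard ℓ, f k W

namespace Equiv.Perm

theorem sum_apply_image_eq_of_card_eq (f : α → Finset α → M) {p p' : α} {V V' : Finset α}
    (hp : p ∉ V) (hp' : p' ∉ V') (h : #V = #V') :
    ∑ σ : Perm α, f (σ p) (V.image σ) = ∑ σ : Perm α, f (σ p') (V'.image σ) := by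
  obtain ⟨τ, hτp, hτV⟩ := exists_apply_eq_and_image_eq hp' hp h.symm
  refine Fintype.sum_equiv (Equiv.mulRight τ) _ _ fun σ => ?_
  simp only [coe_mulRight, coe_mul, Function.comp_apply, hτp, ← image_image, hτV]

theorem image_univ_sdiff_singleton (σ : Perm α) (k : α) :
    (univ \ {k}).image σ = univ \ {σ k} := by
  rw [image_sdiff _ _ σ.injective, image_singleton, image_univ_equiv]

theorem pointedSubsetSum_comp (σ : Perm α) (ℓ : ℕ) (f : α → Finset α → M) :
    pointedSubsetSum ℓ (fun k W => f (σ k) (W.image σ)) = pointedSubsetSum ℓ f := by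
  refine Fintype.sum_equiv σ _ _ fun k => ?_
  rw [← image_univ_sdiff_singleton, sum_powersetCard_image_of_injective σ.injective]

theorem sum_sum_powersetCard_image (f : α → Finset α → M) {p : α} {S V : Finset α}
    (hpS : p ∉ S) (hpV : p ∉ V) :
    ∑ σ : Perm α, ∑ W ∈ (S.image σ).powersetCard #V, f (σ p) W =
      (#S).choose #V • ∑ σ : Perm α, f (σ p) (V.image σ) := by
  simp_rw [sum_powersetCard_image_of_injective (Equiv.injective _)]
  rw [sum_comm, ← card_powersetCard, ← sum_const]
  refine sum_congr rfl fun U hU => ?_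
  obtain ⟨hUS, hUV⟩ := mem_powersetCard.1 hU
  exact sum_apply_image_eq_of_card_eq f (fun h => hpS (hUS h)) hpV hUV

theorem card_mul_choose_smul_sum_apply_image (f : α → Finset α → M) {p : α} {V : Finset α}
    (hpV : p ∉ V) :
    (Fintype.card α * (Fintype.card α - 1).choose #V) • ∑ σ : Perm α, f (σ p) (V.image σ) =
      (Fintype.card α)! • pointedSubsetSum #V f := by
  have hcount : ∑ q, ∑ U ∈ (univ \ {q}).powersetCard #V, ∑ σ : Perm α, f (σ q) (U.image σ) =
      (Fintype.card α * (Fintype.card α - 1).choose #V) • ∑ σ : Perm α, f (σ p) (V.image σ) := by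
    have hterm (q : α) (U : Finset α) (hU : U ∈ (univ \ {q}).powersetCard #V) :
        ∑ σ : Perm α, f (σ q) (U.image σ) = ∑ σ : Perm α, f (σ p) (V.image σ) := by
      obtain ⟨hUq, hUV⟩ := mem_powersetCard.1 hU
      exact sum_apply_image_eq_of_card_eq f (fun h => by simpa using hUq h) hpV hUV
    rw [sum_congr rfl fun q _ => sum_congr rfl (hterm q)]
    simp only [sum_const, card_powersetCard, card_univ_sdiff, card_singleton, Finset.card_univ,
      smul_smul]
  have hswap : ∑ q, ∑ U ∈ (univ \ {q}).powersetCard #V, ∑ σ : Perm α, f (σ q) (U.image σ) =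
      (Fintype.card α)! • pointedSubsetSum #V f := by
    rw [sum_congr rfl fun q _ => sum_comm, sum_comm]
    have hperm (σ : Perm α) := pointedSubsetSum_comp σ #V f
    simp only [pointedSubsetSum] at hperm
    simp only [hperm, sum_const, Finset.card_univ, Fintype.card_perm]
    rfl
  rw [← hcount, hswap]

theorem sum_sub_sum_powersetCard_image {𝕜 : Type*} [Field 𝕜] [CharZero 𝕜]
    (f : α → Finset α → 𝕜) {p : α} {S : Finset α} (hpS : p ∉ S) {ℓ : ℕ}
    (hℓ : ℓ ≤ Fintype.card α - 1) :
    ∑ σ : Perm α, (∑ W ∈ (univ \ {σ p}).powersetCard ℓ, f (σ p) W -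
        ∑ W ∈ (S.image σ).powersetCard ℓ, f (σ p) W) =
      (Fintype.card α - 1)! * (1 - ((#S).choose ℓ : 𝕜) / (Fintype.card α - 1).choose ℓ) *
        pointedSubsetSum ℓ f := by
  obtain ⟨V, hV, rfl⟩ := exists_subset_card_eq (s := univ \ {p}) (by simpa [card_univ_sdiff])
  have hpV : p ∉ V := fun h => by simpa using hV h
  have : Nonempty α := ⟨p⟩
  have hC : ((Fintype.card α - 1).choose #V : 𝕜) ≠ 0 := by
    exact_mod_cast (Nat.choose_pos hℓ).ne'
  have havg : ((Fintype.card α - 1).choose #V : 𝕜) * ∑ σ : Perm α, f (σ p) (V.image σ) =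
      (Fintype.card α - 1)! * pointedSubsetSum #V f := by
    have hcount := card_mul_choose_smul_sum_apply_image f hpV
    rw [nsmul_eq_mul, nsmul_eq_mul, ← Nat.mul_factorial_pred Fintype.card_ne_zero] at hcount
    push_cast at hcount
    exact mul_left_cancel₀ (Nat.cast_ne_zero.2 Fintype.card_ne_zero) (by linear_combination hcount)
  simp_rw [sum_sub_distrib, ← image_univ_sdiff_singleton]
  rw [sum_sum_powersetCard_image f (by simp) hpV, sum_sum_powersetCard_image f hpS hpV,
    card_univ_sdiff, card_singleton, nsmul_eq_mul, nsmul_eq_mul, mul_right_comm, ← havg]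
  field_simp

end Equiv.Perm

end

/-- Symmetrization identity over all `K!` permutations used in the converse proof of the
data shuffling lower bound.  Workers `{1,…,K}` are encoded as `Fin K`; the position
`j ∈ {1,…,K−1}` is encoded as the index `j - 1 : Fin K`, and `{σ(1),…,σ(j−1)}` is the
image under `σ` of the first `j−1` positions. -/
theorem perm_symmetrization_identity (K : ℕ) (ℓ j : ℕ)
    (hℓ : ℓ ≤ K - 1) (hj1 : 1 ≤ j) (hj2 : j ≤ K - 1)
    (f : Fin K → Finset (Fin K) → ℝ) :
    ∑ σ : Equiv.Perm (Fin K),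
      ((∑ W ∈ (Finset.univ \ {σ ⟨j - 1, by omega⟩}).powersetCard ℓ,
          f (σ ⟨j - 1, by omega⟩) W) -
        ∑ W ∈ ((Finset.univ.filter (fun i : Fin K => (i : ℕ) + 1 < j)).image σ).powersetCard ℓ,
          f (σ ⟨j - 1, by omega⟩) W) =
    ((K - 1).factorial : ℝ) *
        (1 - ((j - 1).choose ℓ : ℝ) / ((K - 1).choose ℓ : ℝ)) *
      ∑ k : Fin K, ∑ W ∈ (Finset.univ \ {k}).powersetCard ℓ, f k W := by
  have hpS : (⟨j - 1, by omega⟩ : Fin K) ∉ univ.filter (fun i : Fin K => (i : ℕ) + 1 < j) := by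
    simp only [mem_filter, mem_univ, true_and]
    omega
  have hcard : #(univ.filter (fun i : Fin K => (i : ℕ) + 1 < j)) = j - 1 := by
    rw [filter_congr (q := fun i : Fin K => (i : ℕ) < j - 1) (fun i _ => by omega),
      Fin.card_filter_val_lt]
    omega
  have key := Equiv.Perm.sum_sub_sum_powersetCard_image (ℓ := ℓ) f hpS
    (by rwa [Fintype.card_fin])
  rwa [hcard, Fintype.card_fin] at key
end

section
/- Let K ≥ 2 be an integer and let f be any real-valued function on pairs (k, W) with k ∈ {1,…,K} and W ⊆ {1,…,K}\{k}. For ℓ ∈ {0,…,K−1} set x_ℓ = ∑_{k=1}^{K} ∑_{W ⊆ {1,…,K}\{k}, |W| = ℓ} f(k, W). Then (1/K!) ∑_{σ ∈ S_K} ∑_{j=1}^{K−1} [ ∑_{W ⊆ {1,…,K}\{σ(j)}} f(σ(j), W) − ∑_{W ⊆ {σ(1),…,σ(j−1)}} f(σ(j), W) ] = ∑_{ℓ=0}^{K−1} (ℓ/(ℓ+1))·x_ℓ, where S_K is the set of all permutations of {1,…,K}. -/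
/-! In the pair `(σ, p)`, the bracket sums `f (σ p) W` over the sets `W ∌ σ p` that contain an
element placed after `σ p` by `σ`; in particular the last position contributes nothing. Exchanging
the order of summation, `f k W` is therefore counted once for every permutation in which `k` is not
placed last among the `#W + 1` elements of `insert k W`. By symmetry each of these elements is
placed last by the same number `K! / (#W + 1)` of permutations, so the coefficient of `f k W` is
`K! * #W / (#W + 1)`; grouping the sets `W` by size gives the right-hand side. -/

open Finset Nat

section LinearOrder

variable {α : Type*} [Fintype α] [LinearOrder α]

-- Composing with the transposition `a ↔ c` moves the strict argmax on `S` from `a` to `c`.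
theorem card_filter_perm_argmax_le {S : Finset α} (a : α) {c : α} (hc : c ∈ S) :
    #{τ : Equiv.Perm α | ∀ b ∈ S, b ≠ a → τ b < τ a} ≤
      #{τ : Equiv.Perm α | ∀ b ∈ S, b ≠ c → τ b < τ c} := by
  refine card_le_card_of_injOn (· * Equiv.swap a c) (fun τ hτ => ?_)
    (fun _ _ _ _ => mul_right_cancel)
  simp only [mem_coe, mem_filter, mem_univ, true_and] at hτ ⊢
  intro b hb hbc
  simp only [Equiv.Perm.coe_mul, Function.comp_apply, Equiv.swap_apply_right]
  refine hτ _ ?_ (by simpa [Equiv.swap_apply_eq_iff] using hbc)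
  rw [Equiv.swap_apply_def]
  split_ifs
  exacts [hc, hb]

theorem card_mul_card_filter_perm_argmax_eq_factorial {S : Finset α} {a : α} (ha : a ∈ S) :
    #S * #{τ : Equiv.Perm α | ∀ b ∈ S, b ≠ a → τ b < τ a} = (Fintype.card α)! := by
  have hunique (τ : Equiv.Perm α) : #{c ∈ S | ∀ b ∈ S, b ≠ c → τ b < τ c} = 1 := by
    obtain ⟨c, hc, hmax⟩ := S.exists_max_image τ ⟨a, ha⟩
    refine card_eq_one.2 ⟨c, eq_singleton_iff_unique_mem.2 ⟨?_, fun d hd => ?_⟩⟩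
    · exact mem_filter.2 ⟨hc, fun b hb hbc => (hmax b hb).lt_of_ne (τ.injective.ne hbc)⟩
    · rw [mem_filter] at hd
      by_contra hdc
      exact (hd.2 c hc (Ne.symm hdc)).not_ge (hmax d hd.1)
  calc #S * #{τ : Equiv.Perm α | ∀ b ∈ S, b ≠ a → τ b < τ a}
      = ∑ c ∈ S, #{τ : Equiv.Perm α | ∀ b ∈ S, b ≠ c → τ b < τ c} := by
        rw [sum_congr rfl fun c hc => le_antisymm (card_filter_perm_argmax_le c ha)
          (card_filter_perm_argmax_le a hc), sum_const, smul_eq_mul]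
    _ = ∑ τ : Equiv.Perm α, #{c ∈ S | ∀ b ∈ S, b ≠ c → τ b < τ c} := by
        simp only [card_filter]
        exact sum_comm
    _ = (Fintype.card α)! := by simp [hunique, Fintype.card_perm]

theorem card_succ_mul_card_filter_perm_forall_lt_eq_factorial {W : Finset α} {k : α}
    (hk : k ∉ W) :
    (#W + 1) * #{τ : Equiv.Perm α | ∀ w ∈ W, τ w < τ k} = (Fintype.card α)! := by
  rw [← card_insert_of_notMem hk,
    ← card_mul_card_filter_perm_argmax_eq_factorial (mem_insert_self k W)]
  congr 2
  ext τ
  simp only [mem_filter, mem_univ, true_and, forall_mem_insert, ne_eq, not_true_eq_false,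
    IsEmpty.forall_iff]
  exact forall₂_congr fun w hw => by simp [ne_of_mem_of_not_mem hw hk]

theorem cast_card_filter_perm_not_forall_symm_lt {𝕜 : Type*} [Field 𝕜] [CharZero 𝕜]
    {W : Finset α} {k : α} (hk : k ∉ W) :
    (#{σ : Equiv.Perm α | ¬ ∀ w ∈ W, σ.symm w < σ.symm k} : 𝕜)
      = (Fintype.card α)! * (#W / (#W + 1)) := by
  have hinv : #{σ : Equiv.Perm α | ∀ w ∈ W, σ.symm w < σ.symm k}
      = #{τ : Equiv.Perm α | ∀ w ∈ W, τ w < τ k} :=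
    card_equiv (Equiv.inv _) (by simp)
  have hcount := card_succ_mul_card_filter_perm_forall_lt_eq_factorial hk
  rw [filter_not, card_sdiff_of_subset (filter_subset _ _), hinv, Finset.card_univ,
    Fintype.card_perm, Nat.cast_sub (hcount ▸ le_mul_of_one_le_left' (Nat.le_add_left 1 _)),
    ← hcount]
  push_cast
  field_simp
  ring

theorem sum_powerset_sub_sum_powerset_image_lt {M : Type*} [AddCommGroup M]
    (f : α → Finset α → M) (σ : Equiv.Perm α) (p : α) :
    ∑ W ∈ (univ \ {σ p}).powerset, f (σ p) W - ∑ W ∈ (image σ {i | i < p}).powerset, f (σ p) W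
      = ∑ W ∈ (univ \ {σ p}).powerset with ¬ ∀ w ∈ W, σ.symm w < p, f (σ p) W := by
  have himage : image σ {i | i < p} = ({b | σ.symm b < p} : Finset α) := by
    ext b
    simp only [mem_image, mem_filter, mem_univ, true_and]
    exact ⟨fun ⟨i, hi, hib⟩ => hib ▸ by simpa, fun hb => ⟨σ.symm b, hb, by simp⟩⟩
  have hsub : ({b | σ.symm b < p} : Finset α).powerset ⊆ (univ \ {σ p}).powerset :=
    powerset_mono.2 fun b hb => by
      simp only [mem_filter, mem_univ, true_and] at hb
      simpa using fun h : b = σ p => by simp [h] at hb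
  rw [himage, ← sum_sdiff_eq_sub hsub]
  congr 1
  ext W
  simp [subset_iff]

theorem image_filter_lt_of_isTop {p : α} (hp : IsTop p) (σ : Equiv.Perm α) :
    image σ {i | i < p} = univ \ {σ p} := by
  ext b
  simp only [mem_image, mem_filter, mem_univ, true_and, mem_sdiff, mem_singleton]
  refine ⟨?_, fun hb => ⟨σ.symm b, (hp _).lt_of_ne ?_, σ.apply_symm_apply b⟩⟩
  · rintro ⟨i, hi, rfl⟩ h
    exact hi.ne (σ.injective h)
  · rwa [Ne, Equiv.symm_apply_eq]

theorem sum_perm_sum_sum_powerset_sub_sum_powerset_image_lt {𝕜 : Type*} [Field 𝕜] [CharZero 𝕜]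
    (f : α → Finset α → 𝕜) :
    ∑ σ : Equiv.Perm α, ∑ p,
      (∑ W ∈ (univ \ {σ p}).powerset, f (σ p) W - ∑ W ∈ (image σ {i | i < p}).powerset, f (σ p) W)
      = ∑ k, ∑ W ∈ (univ \ {k}).powerset, (Fintype.card α)! * (#W / (#W + 1) : 𝕜) * f k W := by
  calc _ = ∑ σ : Equiv.Perm α, ∑ k, ∑ W ∈ (univ \ {k}).powerset,
          if ¬ ∀ w ∈ W, σ.symm w < σ.symm k then f k W else 0 := by
        refine sum_congr rfl fun σ _ => ?_
        conv_rhs => rw [← Equiv.sum_comp σ]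
        simp only [sum_powerset_sub_sum_powerset_image_lt, sum_filter, Equiv.symm_apply_apply]
    _ = ∑ k, ∑ W ∈ (univ \ {k}).powerset,
          (#{σ : Equiv.Perm α | ¬ ∀ w ∈ W, σ.symm w < σ.symm k} : 𝕜) * f k W := by
        rw [sum_comm]
        refine sum_congr rfl fun k _ => ?_
        rw [sum_comm]
        refine sum_congr rfl fun W _ => ?_
        rw [← sum_filter, sum_const, nsmul_eq_mul]
    _ = _ := by
        refine sum_congr rfl fun k _ => sum_congr rfl fun W hW => ?_
        rw [cast_card_filter_perm_not_forall_symm_lt fun hk => by simpa using mem_powerset.1 hW hk]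

end LinearOrder

theorem sum_sum_powerset_sdiff_singleton_eq_sum_range {α R : Type*} [Fintype α] [DecidableEq α]
    [CommSemiring R] (c : ℕ → R) (f : α → Finset α → R) :
    ∑ k, ∑ W ∈ (univ \ {k}).powerset, c #W * f k W
      = ∑ ℓ ∈ range (Fintype.card α), c ℓ * ∑ k, ∑ W ∈ (univ \ {k}).powersetCard ℓ, f k W := by
  simp only [mul_sum]
  rw [sum_comm]
  refine sum_congr rfl fun k _ => ?_
  have hcard : #(univ \ {k}) + 1 = Fintype.card α := by
    rw [card_univ_sdiff, card_singleton, Nat.sub_add_cancel (Fintype.card_pos_iff.2 ⟨k⟩)]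
  rw [sum_powerset, hcard]
  exact sum_congr rfl fun ℓ _ => sum_congr rfl fun W hW => by rw [(mem_powersetCard.1 hW).2]

-- Positions are 0-indexed: `j : Fin (K - 1)` is the paper's position `j + 1`.
/-- The fully averaged combinatorial identity of the data-shuffling converse proof:
averaging over all `K!` permutations and all positions `j ∈ {1,…,K−1}` (encoded by
`j : Fin (K-1)`, representing the 1-indexed position `j+1`) yields
`∑_{ℓ=0}^{K−1} (ℓ/(ℓ+1))·x_ℓ`, where
`x_ℓ = ∑_k ∑_{W ⊆ {1,…,K}\{k}, |W|=ℓ} f(k,W)`. -/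
theorem perm_averaged_identity (K : ℕ) (f : Fin K → Finset (Fin K) → ℝ) :
    (1 / (K.factorial : ℝ)) *
      ∑ σ : Equiv.Perm (Fin K), ∑ j : Fin (K - 1),
        ((∑ W ∈ (Finset.univ \ {σ (Fin.castLE (by omega) j)}).powerset,
            f (σ (Fin.castLE (by omega) j)) W) -
          ∑ W ∈ ((Finset.univ.filter (fun i : Fin K => (i : ℕ) < (j : ℕ))).image σ).powerset,
            f (σ (Fin.castLE (by omega) j)) W) =
    ∑ ℓ ∈ Finset.range K, ((ℓ : ℝ) / ((ℓ : ℝ) + 1)) *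
      ∑ k : Fin K, ∑ W ∈ (Finset.univ \ {k}).powersetCard ℓ, f k W := by
  calc _ = 1 / (K ! : ℝ) * ∑ σ : Equiv.Perm (Fin K), ∑ p, (∑ W ∈ (univ \ {σ p}).powerset,
          f (σ p) W - ∑ W ∈ (image σ {i | i < p}).powerset, f (σ p) W) := by
        refine congrArg _ (sum_congr rfl fun σ _ => Fintype.sum_of_injective _
          (Fin.castLE_injective _) _ _ (fun p hp => ?_) fun j => rfl)
        have htop : IsTop p := fun i => by
          have : ¬ (p : ℕ) < K - 1 := fun h => hp ⟨⟨p, h⟩, rfl⟩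
          rw [Fin.le_def]
          omega
        rw [image_filter_lt_of_isTop htop, sub_self]
    _ = ∑ k, ∑ W ∈ (univ \ {k}).powerset, (#W / (#W + 1) : ℝ) * f k W := by
        rw [sum_perm_sum_sum_powerset_sub_sum_powerset_image_lt, Fintype.card_fin, mul_sum]
        refine sum_congr rfl fun k _ => ?_
        rw [mul_sum]
        refine sum_congr rfl fun W _ => ?_
        field_simp
    _ = _ := by
        simpa using sum_sum_powerset_sdiff_singleton_eq_sum_range (fun ℓ : ℕ => (ℓ : ℝ) / (ℓ + 1)) f
end

section
/- Let K ≥ 2 and N ≥ 1 be integers and let j ∈ {1,…,K−1}. Then N(K−j+1)/(Kj) − N(K+1)(j−1)/(jK(K−1)(j+1)) = (1 + 2/((K−1)(j+1)))·N(K−j)/(Kj). -/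
/-- The multiplicative gap identity at the storage breakpoints `S = jN/K`:
`N(K−j+1)/(Kj) − N(K+1)(j−1)/(jK(K−1)(j+1)) = (1 + 2/((K−1)(j+1)))·N(K−j)/(Kj)`. -/
theorem gap_identity_at_breakpoints (K N : ℕ) (hK : 2 ≤ K) (hN : 1 ≤ N)
    (j : ℕ) (hj1 : 1 ≤ j) (hj2 : j ≤ K - 1) :
    (N : ℝ) * ((K : ℝ) - (j : ℝ) + 1) / ((K : ℝ) * j) -
        (N : ℝ) * ((K : ℝ) + 1) * ((j : ℝ) - 1) /
          ((j : ℝ) * K * ((K : ℝ) - 1) * ((j : ℝ) + 1)) =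
      (1 + 2 / (((K : ℝ) - 1) * ((j : ℝ) + 1))) *
        ((N : ℝ) * ((K : ℝ) - (j : ℝ)) / ((K : ℝ) * j)) := by
  have hKR : (2:ℝ) ≤ (K:ℝ) := by exact_mod_cast hK
  have hjR : (1:ℝ) ≤ (j:ℝ) := by exact_mod_cast hj1
  have h1 : (K:ℝ) ≠ 0 := by linarith
  have h2 : (j:ℝ) ≠ 0 := by linarith
  have h3 : (K:ℝ) - 1 ≠ 0 := by linarith
  have h4 : (j:ℝ) + 1 ≠ 0 := by linarith
  field_simp
  ring
end

section
/- Let K ≥ 2 and N ≥ 1 be integers. Define the points P_i = ((1 + i(K−1)/K)·N/K, N(K−i)/(K(i+1))) ∈ ℝ² for i ∈ {0,…,K}, and for j ∈ {1,…,K−1} define L_j(S) = N(K−j)/(Kj) − K(S − jN/K)/(j(j+1)). Then for every real S with N/K ≤ S ≤ N there exists a real R such that (S, R) lies in the convex hull of {P_0, P_1, …, P_K} and (K−1)·R ≤ K·max_{j ∈ {1,…,K−1}} L_j(S). -/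
/-!
The abscissae `x_i` of the points `P_i = (x_i, y_i)` are equally spaced, from `x_0 = N/K` to
`x_K = N`, so `x_i ≤ S ≤ x_{i+1}` for some `i < K`. The line `L_j` passes through
`P_j`, and `L_{K-1}` also through `P_K = (N, 0)`; moreover `(K-1)·y_i ≤ K·L_{i+1}(x_i)`.
Hence for `j = min (i+1) (K-1)` both `P_i` and `P_{i+1}` lie in the half-plane
`(K-1)·y ≤ K·L_j(x)`, which is convex because `L_j` is affine, and the point of the segment
`[P_i, P_{i+1}]` above `S` is the required `(S, R)`.
-/

/-- The achievable storage-rate pair `P_i = ((1 + i(K−1)/K)·N/K, N(K−i)/(K(i+1)))` of the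
structural-invariant coded shuffling scheme. -/
noncomputable def Ppt (K N i : ℕ) : ℝ × ℝ :=
  ((1 + (i : ℝ) * ((K : ℝ) - 1) / K) * N / K,
    (N : ℝ) * ((K : ℝ) - i) / ((K : ℝ) * ((i : ℝ) + 1)))

/-- The `j`-th lower-bound line on the worst-case communication rate:
`L_j(S) = N(K−j)/(Kj) − K(S − jN/K)/(j(j+1))`. -/
noncomputable def Lline (K N j : ℕ) (S : ℝ) : ℝ :=
  (N : ℝ) * ((K : ℝ) - (j : ℝ)) / ((K : ℝ) * (j : ℝ)) -
    (K : ℝ) * (S - (j : ℝ) * (N : ℝ) / (K : ℝ)) / ((j : ℝ) * ((j : ℝ) + 1))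

theorem Prod.exists_mem_segment_fst_eq {𝕜 E F : Type*} [Semiring 𝕜] [PartialOrder 𝕜]
    [AddCommMonoid E] [Module 𝕜 E] [AddCommMonoid F] [Module 𝕜 F] {a b : E × F} {x : E}
    (hx : x ∈ segment 𝕜 a.1 b.1) : ∃ p ∈ segment 𝕜 a b, p.1 = x := by
  obtain ⟨s, t, hs, ht, hst, rfl⟩ := hx
  exact ⟨s • a + t • b, ⟨s, t, hs, ht, hst, rfl⟩, rfl⟩

theorem exists_mem_Icc_apply_succ {α : Type*} [LinearOrder α] (f : ℕ → α) {x : α} :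
    ∀ {n : ℕ}, 0 < n → f 0 ≤ x → x ≤ f n → ∃ i < n, x ∈ Set.Icc (f i) (f (i + 1))
  | 0, hn, _, _ => absurd hn (lt_irrefl 0)
  | n + 1, _, h0, hx => by
    by_cases h : 0 < n ∧ x ≤ f n
    · obtain ⟨i, hi, hmem⟩ := exists_mem_Icc_apply_succ f h.1 h0 h.2
      exact ⟨i, by omega, hmem⟩
    · refine ⟨n, n.lt_succ_self, ?_, hx⟩
      rcases Nat.eq_zero_or_pos n with rfl | hpos
      · exact h0
      · exact (not_le.1 fun hxn => h ⟨hpos, hxn⟩).le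

theorem Ppt_fst (K N i : ℕ) :
    (Ppt K N i).1 = (N : ℝ) / K + i * (((K : ℝ) - 1) * N / K ^ 2) := by
  simp only [Ppt]
  ring

theorem Ppt_snd_nonneg {K N i : ℕ} (hi : i ≤ K) : 0 ≤ (Ppt K N i).2 := by
  have : (i : ℝ) ≤ K := by exact_mod_cast hi
  simp only [Ppt]
  exact div_nonneg (mul_nonneg N.cast_nonneg (by linarith)) (by positivity)

theorem Lline_Ppt_self {K N j : ℕ} (hK : K ≠ 0) (hj : j ≠ 0) :
    Lline K N j (Ppt K N j).1 = (Ppt K N j).2 := by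
  have : (K : ℝ) ≠ 0 := by exact_mod_cast hK
  have : (j : ℝ) ≠ 0 := by exact_mod_cast hj
  simp only [Lline, Ppt]
  field_simp
  ring

theorem Lline_sub_one_Ppt_self {K N : ℕ} (hK : 2 ≤ K) :
    Lline K N (K - 1) (Ppt K N K).1 = (Ppt K N K).2 := by
  have hK' : (2 : ℝ) ≤ K := by exact_mod_cast hK
  have : (K : ℝ) - 1 ≠ 0 := by linarith
  have : (K : ℝ) ≠ 0 := by linarith
  simp only [Lline, Ppt, Nat.cast_sub (by omega : 1 ≤ K), Nat.cast_one,
    sub_sub_cancel, sub_add_cancel]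
  field_simp
  ring

theorem mul_Ppt_snd_le_Lline_succ {K N i : ℕ} (hi : i + 2 ≤ K) :
    ((K : ℝ) - 1) * (Ppt K N i).2 ≤ K * Lline K N (i + 1) (Ppt K N i).1 := by
  have hiK : (i : ℝ) + 2 ≤ K := by exact_mod_cast hi
  have hK : (0 : ℝ) < K := by linarith
  have key : K * Lline K N (i + 1) (Ppt K N i).1 - ((K : ℝ) - 1) * (Ppt K N i).2
      = N * i * (K - i - 2) / (K * (i + 1) * (i + 2)) := by
    simp only [Lline, Ppt]
    push_cast
    field_simp
    ring
  have : 0 ≤ (N : ℝ) * i * (K - i - 2) / (K * (i + 1) * (i + 2)) := by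
    have : (0 : ℝ) ≤ K - i - 2 := by linarith
    positivity
  linarith

theorem Lline_eq_sub (K N j : ℕ) (S : ℝ) :
    Lline K N j S = Lline K N j 0 - K / (j * (j + 1)) * S := by
  simp only [Lline]
  ring

def gapHalfPlane (K N j : ℕ) : Set (ℝ × ℝ) :=
  {p | ((K : ℝ) - 1) * p.2 ≤ K * Lline K N j p.1}

theorem convex_gapHalfPlane (K N j : ℕ) : Convex ℝ (gapHalfPlane K N j) := by
  intro p hp q hq a b ha hb hab
  simp only [gapHalfPlane, Set.mem_ofPred_eq, Prod.fst_add, Prod.snd_add, Prod.smul_fst,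
    Prod.smul_snd, smul_eq_mul] at *
  rw [Lline_eq_sub] at *
  generalize Lline K N j 0 = c₀, (K : ℝ) / (j * (j + 1)) = c₁ at *
  obtain rfl : b = 1 - a := by linarith
  nlinarith [mul_le_mul_of_nonneg_left hp ha, mul_le_mul_of_nonneg_left hq hb]

theorem mem_gapHalfPlane_of_Lline_eq {K N j : ℕ} {p : ℝ × ℝ} (hp : Lline K N j p.1 = p.2)
    (hp₂ : 0 ≤ p.2) : p ∈ gapHalfPlane K N j := by
  change ((K : ℝ) - 1) * p.2 ≤ K * Lline K N j p.1
  rw [hp]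
  linarith

theorem exists_Ppt_mem_gapHalfPlane {K N i : ℕ} (hK : 2 ≤ K) (hi : i < K) :
    ∃ j ∈ Finset.Icc 1 (K - 1),
      Ppt K N i ∈ gapHalfPlane K N j ∧ Ppt K N (i + 1) ∈ gapHalfPlane K N j := by
  rcases Nat.lt_or_ge (i + 1) K with hi' | hi'
  · refine ⟨i + 1, Finset.mem_Icc.2 ⟨by omega, by omega⟩, mul_Ppt_snd_le_Lline_succ hi',
      mem_gapHalfPlane_of_Lline_eq (Lline_Ppt_self (by omega) (by omega)) (Ppt_snd_nonneg hi'.le)⟩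
  · obtain rfl : i = K - 1 := by omega
    rw [Nat.sub_add_cancel (by omega : 1 ≤ K)]
    exact ⟨K - 1, Finset.mem_Icc.2 ⟨by omega, le_rfl⟩,
      mem_gapHalfPlane_of_Lline_eq (Lline_Ppt_self (by omega) (by omega))
        (Ppt_snd_nonneg (by omega)),
      mem_gapHalfPlane_of_Lline_eq (Lline_sub_one_Ppt_self hK) (Ppt_snd_nonneg le_rfl)⟩

/-- Theorem 3 (convex-geometric form): for every storage `S ∈ [N/K, N]` there is a rate
`R` with `(S, R)` in the convex hull of the achievable points `P_0,…,P_K` such that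
`(K−1)·R ≤ K·max_{1 ≤ j ≤ K−1} L_j(S)`, i.e. the achievable worst-case rate is within a
factor `K/(K−1)` of the information-theoretic lower bound. -/
theorem achievable_within_gap (K N : ℕ) (hK : 2 ≤ K) :
    ∀ S : ℝ, (N : ℝ) / K ≤ S → S ≤ (N : ℝ) →
      ∃ R : ℝ, (S, R) ∈ convexHull ℝ (Ppt K N '' {i | i ≤ K}) ∧
        ((K : ℝ) - 1) * R ≤
          (K : ℝ) * (Finset.Icc 1 (K - 1)).sup' (Finset.nonempty_Icc.mpr (by omega))
            (fun j => Lline K N j S) := by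
  intro S hS₀ hS₁
  have hPK : (Ppt K N K).1 = N := by
    rw [Ppt_fst]
    field_simp
    ring
  obtain ⟨i, hi, hSi⟩ := exists_mem_Icc_apply_succ (fun m => (Ppt K N m).1) (by omega : 0 < K)
    (by simpa [Ppt_fst] using hS₀) (by simpa [hPK] using hS₁)
  obtain ⟨j, hj, hPi, hPi₁⟩ := exists_Ppt_mem_gapHalfPlane (N := N) hK hi
  obtain ⟨p, hp, rfl⟩ := Prod.exists_mem_segment_fst_eq
    (a := Ppt K N i) (b := Ppt K N (i + 1)) (segment_eq_Icc (hSi.1.trans hSi.2) ▸ hSi)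
  refine ⟨p.2, segment_subset_convexHull
    (Set.mem_image_of_mem _ (show i ∈ {m | m ≤ K} from hi.le))
    (Set.mem_image_of_mem _ (show i + 1 ∈ {m | m ≤ K} from hi)) hp, ?_⟩
  calc ((K : ℝ) - 1) * p.2 ≤ K * Lline K N j p.1 :=
        (convex_gapHalfPlane K N j).segment_subset hPi hPi₁ hp
    _ ≤ _ := by gcongr; exact Finset.le_sup' (fun j => Lline K N j p.1) hj
end

section
/- Let K ≥ 2 and N ≥ 1 be integers. Define the points Q_m = (mN/K, N(K−m)/(Km)) ∈ ℝ² for m ∈ {1,…,K}, and for j ∈ {1,…,K−1} define L_j(S) = N(K−j)/(Kj) − K(S − jN/K)/(j(j+1)). Then for every real S with N/K ≤ S ≤ N, the point (S, max_{j ∈ {1,…,K−1}} L_j(S)) lies in the convex hull of {Q_1, …, Q_K}. -/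
/-- The lower-bound storage-rate point `Q_m = (mN/K, N(K−m)/(Km))`. -/
noncomputable def Qpt (K N m : ℕ) : ℝ × ℝ :=
  ((m : ℝ) * N / K, (N : ℝ) * ((K : ℝ) - m) / ((K : ℝ) * m))

/-!
The points `Q_m` lie on the graph of the convex function `x ↦ N² / (K x) − N / K`, and `L_j`
is the chord through `Q_j` and `Q_{j+1}`. By convexity every chord lies below all the points
`Q_m`, so over `[iN/K, (i+1)N/K]` the largest chord is `L_i` itself, whose graph there is the
segment `[Q_i, Q_{i+1}]`.
-/

lemma exists_nat_mem_Icc_le_le_add_one {n : ℕ} (hn : 1 ≤ n) {t : ℝ} (h₁ : 1 ≤ t)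
    (h₂ : t ≤ n + 1) : ∃ i ∈ Finset.Icc 1 n, (i : ℝ) ≤ t ∧ t ≤ i + 1 := by
  have hfloor : 1 ≤ ⌊t⌋₊ := Nat.le_floor (by simpa using h₁)
  refine ⟨min n ⌊t⌋₊, Finset.mem_Icc.2 ⟨by omega, min_le_left _ _⟩, ?_, ?_⟩
  · calc ((min n ⌊t⌋₊ : ℕ) : ℝ) ≤ ⌊t⌋₊ := by exact_mod_cast min_le_right _ _
      _ ≤ t := Nat.floor_le (by linarith)
  · rcases le_total n ⌊t⌋₊ with h | h
    · rwa [min_eq_left h]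
    · rw [min_eq_right h]
      exact (Nat.lt_floor_add_one t).le

lemma Lline_add_mul {K N j : ℕ} {a b x y : ℝ} (hab : a + b = 1) :
    Lline K N j (a * x + b * y) = a * Lline K N j x + b * Lline K N j y := by
  obtain rfl : b = 1 - a := by linarith
  unfold Lline
  ring

lemma Lline_Qpt_fst_le {K N j m : ℕ} (hK : 0 < K) (hj : 0 < j) (hm : 0 < m) :
    Lline K N j (Qpt K N m).1 ≤ (Qpt K N m).2 := by
  have key : (Qpt K N m).2 - Lline K N j (Qpt K N m).1 =
      N * (((j : ℝ) - m) * ((j : ℝ) - m + 1)) / (m * j * (j + 1)) := by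
    unfold Lline Qpt
    field_simp
    ring
  -- `(j - m)(j - m + 1)` is a product of two consecutive integers
  have hprod : (0 : ℝ) ≤ ((j : ℝ) - m) * ((j : ℝ) - m + 1) := by
    rcases le_or_gt m j with h | h
    · have : (m : ℝ) ≤ j := by exact_mod_cast h
      nlinarith
    · have : (j : ℝ) + 1 ≤ m := by exact_mod_cast h
      nlinarith
  have : 0 ≤ (Qpt K N m).2 - Lline K N j (Qpt K N m).1 := by
    rw [key]
    positivity
  linarith

lemma Lline_Qpt_fst_self {K N j : ℕ} (hK : 0 < K) (hj : 0 < j) :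
    Lline K N j (Qpt K N j).1 = (Qpt K N j).2 := by
  unfold Lline Qpt
  field_simp
  ring

lemma Lline_Qpt_fst_succ {K N j : ℕ} (hK : 0 < K) (hj : 0 < j) :
    Lline K N j (Qpt K N (j + 1)).1 = (Qpt K N (j + 1)).2 := by
  unfold Lline Qpt
  push_cast
  field_simp
  ring

lemma exists_mem_segment_Qpt_fst {K N : ℕ} (hK : 2 ≤ K) (hN : 0 < N) {S : ℝ}
    (h₁ : (N : ℝ) / K ≤ S) (h₂ : S ≤ N) :
    ∃ i ∈ Finset.Icc 1 (K - 1), S ∈ segment ℝ (Qpt K N i).1 (Qpt K N (i + 1)).1 := by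
  have hK₀ : (0 : ℝ) < K := by positivity
  have hN₀ : (0 : ℝ) < N := by exact_mod_cast hN
  have hcast : ((K - 1 : ℕ) : ℝ) + 1 = K := by
    rw [Nat.cast_sub (by omega)]
    ring
  obtain ⟨i, hi, hi₁, hi₂⟩ := exists_nat_mem_Icc_le_le_add_one (n := K - 1) (t := S * K / N)
    (by omega) (by rw [le_div_iff₀ hN₀, one_mul]; rwa [div_le_iff₀ hK₀] at h₁)
    (by rw [hcast, div_le_iff₀ hN₀]; nlinarith)
  refine ⟨i, hi, ?_⟩
  rw [segment_eq_Icc (by unfold Qpt; push_cast; gcongr; linarith)]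
  unfold Qpt
  push_cast
  constructor
  · rw [div_le_iff₀ hK₀]
    rwa [le_div_iff₀ hN₀] at hi₁
  · rw [le_div_iff₀ hK₀]
    rwa [div_le_iff₀ hN₀] at hi₂

lemma Lline_le_of_mem_segment {K N i j : ℕ} (hK : 0 < K) (hi : 0 < i) (hj : 0 < j) {S : ℝ}
    (hS : S ∈ segment ℝ (Qpt K N i).1 (Qpt K N (i + 1)).1) :
    Lline K N j S ≤ Lline K N i S := by
  obtain ⟨a, b, ha, hb, hab, rfl⟩ := hS
  simp only [smul_eq_mul, Lline_add_mul hab, Lline_Qpt_fst_self hK hi,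
    Lline_Qpt_fst_succ hK hi]
  gcongr
  · exact Lline_Qpt_fst_le hK hj hi
  · exact Lline_Qpt_fst_le hK hj (Nat.succ_pos i)

lemma mk_Lline_mem_segment {K N i : ℕ} (hK : 0 < K) (hi : 0 < i) {S : ℝ}
    (hS : S ∈ segment ℝ (Qpt K N i).1 (Qpt K N (i + 1)).1) :
    (S, Lline K N i S) ∈ segment ℝ (Qpt K N i) (Qpt K N (i + 1)) := by
  obtain ⟨a, b, ha, hb, hab, rfl⟩ := hS
  refine ⟨a, b, ha, hb, hab, ?_⟩
  simp only [smul_eq_mul, Lline_add_mul hab, Lline_Qpt_fst_self hK hi,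
    Lline_Qpt_fst_succ hK hi]
  rfl

/-- On the storage range `[N/K, N]`, the pointwise maximum of the lower-bound lines `L_j`
coincides with the lower convex envelope of the points `Q_1,…,Q_K`: the point
`(S, max_{1 ≤ j ≤ K−1} L_j(S))` lies in the convex hull of `{Q_1,…,Q_K}`. -/
theorem lower_bound_in_convexHull (K N : ℕ) (hK : 2 ≤ K) (hN : 1 ≤ N) :
    ∀ S : ℝ, (N : ℝ) / K ≤ S → S ≤ (N : ℝ) →
      (S, (Finset.Icc 1 (K - 1)).sup' (Finset.nonempty_Icc.mpr (by omega))
          (fun j => Lline K N j S)) ∈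
        convexHull ℝ (Qpt K N '' {m | 1 ≤ m ∧ m ≤ K}) := by
  intro S hS₁ hS₂
  have hK₀ : 0 < K := by omega
  obtain ⟨i, hi, hS⟩ := exists_mem_segment_Qpt_fst hK hN hS₁ hS₂
  obtain ⟨hi₀, hiK⟩ := Finset.mem_Icc.1 hi
  have hsup : (Finset.Icc 1 (K - 1)).sup' (Finset.nonempty_Icc.mpr (by omega))
      (fun j => Lline K N j S) = Lline K N i S :=
    le_antisymm
      (Finset.sup'_le _ _ fun j hj => Lline_le_of_mem_segment hK₀ hi₀ (Finset.mem_Icc.1 hj).1 hS)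
      (Finset.le_sup' (fun j => Lline K N j S) hi)
  rw [hsup]
  refine segment_subset_convexHull ?_ ?_ (mk_Lline_mem_segment hK₀ hi₀ hS)
  · exact ⟨i, ⟨hi₀, by omega⟩, rfl⟩
  · exact ⟨i + 1, ⟨by omega, by omega⟩, rfl⟩
end
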